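/- Let k = ℝ or ℂ, n ≥ 2, 0 < ε ≤ 1, M ≥ 1, let x ∈ k^n be a unit vector and V ⊂ k^n a hyperplane. Let w = h·diag(κ_1, …, κ_n)·h⁻¹ ∈ GL_n(k), where h ∈ GL_n(k) satisfies ‖h‖ ≤ M and ‖h⁻¹‖ ≤ M, d_ℙ([h e_1], [x]) ≤ ε/10, ℙ(h·span(e_2, …, e_n)) ⊆ N_{ε/10}(ℙ(V)), and κ_1, …, κ_n ∈ k^× satisfy |κ_1| ≥ (10M/ε)^{12}·|κ_i| for i = 2, …, n. Then for every x' ∈ ℙ(k^n) with dist(x', ℙ(V)) ≥ ε, every θ with 0 < θ < ε/2, and every integer s ≥ 1: for all x'' ∈ B_θ(x') one has d_ℙ(w^s·x'', w^s·x') ≤ θ·(max_{2≤i≤n} |κ_i| / |κ_1|)^{s/2} and d_ℙ(w^s·x'', [h e_1]) ≤ ε^{11}. -/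

import Mathlib

noncomputable section

/-- Euclidean norm on `Fin n → 𝕜`. -/
def eN {𝕜 : Type*} [RCLike 𝕜] {n : ℕ} (v : Fin n → 𝕜) : ℝ :=
  Real.sqrt (∑ i, ‖v i‖ ^ 2)

/-- Projective distance between (the lines spanned by) two nonzero vectors. -/
def dP {𝕜 : Type*} [RCLike 𝕜] {n : ℕ} (u v : Fin n → 𝕜) : ℝ :=
  sInf {r : ℝ | ∃ a b ζ : 𝕜, eN (a • u) = 1 ∧ eN (b • v) = 1 ∧ ‖ζ‖ = 1 ∧
    r = eN (ζ • a • u - b • v)}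

/-- Distance from a projective point to the projectivization of a subspace. -/
def distPS {𝕜 : Type*} [RCLike 𝕜] {n : ℕ} (u : Fin n → 𝕜)
    (W : Submodule 𝕜 (Fin n → 𝕜)) : ℝ :=
  sInf {r : ℝ | ∃ w : Fin n → 𝕜, w ∈ W ∧ w ≠ 0 ∧ r = dP u w}

/-- Operator norm of a square matrix with respect to the Euclidean norm. -/
def opN {𝕜 : Type*} [RCLike 𝕜] {n : ℕ} (A : Matrix (Fin n) (Fin n) 𝕜) : ℝ :=
  sInf {c : ℝ | 0 ≤ c ∧ ∀ v : Fin n → 𝕜, eN (A.mulVec v) ≤ c * eN v}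

/-!
Write `ρ = max_{i ≠ i₀} ‖κ i‖ / ‖κ i₀‖` and `y = h⁻¹ v`. If `[v]` is `δ`-far from the hyperplane
`h · e_{i₀}^⊥`, then `‖y i₀‖ ≥ δ ‖v‖ / 2M`. As `w^s v = h (κ^s * y)`, the `i₀`-coordinate of `y` is
multiplied by `‖κ i₀‖^s` and every other one by at most `ρ^s ‖κ i₀‖^s`, so two such vectors whose
`y`'s share the `i₀`-coordinate end up at projective distance `O(M² ρ^s)` times the distance of those
`y`'s, divided by that coordinate. Comparing `y` with `y i₀ • e_{i₀}` gives the attraction to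
`[h e_{i₀}]`; comparing the preimages of `x''` and `x'`, rescaled to a common `i₀`-coordinate, gives
the contraction factor `O(M⁶ ρ^s / ε²) ≤ ρ^{s/2}`. Both points are `2ε/5`-far from `h · e_{i₀}^⊥`,
since `x'` is `ε`-far from `V` and `h · e_{i₀}^⊥` lies within `ε/10` of `V`.
-/

open Matrix

section Distances

variable {𝕜 : Type*} [RCLike 𝕜] {n : ℕ}

lemma eN_eq_norm (v : Fin n → 𝕜) : eN v = ‖WithLp.toLp 2 v‖ := by
  rw [EuclideanSpace.norm_eq]; rfl

lemma eN_nonneg (v : Fin n → 𝕜) : 0 ≤ eN v := Real.sqrt_nonneg _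

lemma eN_pos {v : Fin n → 𝕜} (hv : v ≠ 0) : 0 < eN v := by
  simpa [eN_eq_norm] using hv

lemma eN_smul (a : 𝕜) (v : Fin n → 𝕜) : eN (a • v) = ‖a‖ * eN v := by
  simp only [eN_eq_norm, WithLp.toLp_smul, norm_smul]

lemma eN_add_le (u v : Fin n → 𝕜) : eN (u + v) ≤ eN u + eN v := by
  simpa only [eN_eq_norm, WithLp.toLp_add] using norm_add_le _ _

lemma eN_single (i : Fin n) (a : 𝕜) : eN (Pi.single i a) = ‖a‖ := by
  rw [eN_eq_norm, PiLp.toLp_single, PiLp.norm_single]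

lemma norm_apply_le_eN (v : Fin n → 𝕜) (i : Fin n) : ‖v i‖ ≤ eN v := by
  simpa [eN_eq_norm] using PiLp.norm_apply_le (WithLp.toLp 2 v) i

lemma eN_le_eN_of_norm_le {u v : Fin n → 𝕜} (huv : ∀ i, ‖u i‖ ≤ ‖v i‖) : eN u ≤ eN v :=
  Real.sqrt_le_sqrt <| Finset.sum_le_sum fun i _ => by gcongr; exact huv i

lemma continuous_eN : Continuous (eN : (Fin n → 𝕜) → ℝ) := by
  unfold eN; fun_prop

lemma eN_inv_eN_smul {v : Fin n → 𝕜} (hv : v ≠ 0) : eN (((eN v : 𝕜))⁻¹ • v) = 1 := by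
  simpa [eN_eq_norm] using norm_smul_inv_norm (𝕜 := 𝕜) (x := WithLp.toLp 2 v) (by simpa using hv)

lemma norm_eq_of_eN_smul_eq_one {a b : 𝕜} {v : Fin n → 𝕜} (ha : eN (a • v) = 1)
    (hb : eN (b • v) = 1) : ‖a‖ = ‖b‖ := by
  rw [eN_smul] at ha hb
  have : eN v ≠ 0 := fun h => by simp [h] at ha
  exact mul_right_cancel₀ this (ha.trans hb.symm)

lemma ne_zero_of_eN_smul_eq_one {a : 𝕜} {v : Fin n → 𝕜} (ha : eN (a • v) = 1) : a ≠ 0 := by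
  rintro rfl; simp [eN_eq_norm] at ha

lemma dP_nonneg (u v : Fin n → 𝕜) : 0 ≤ dP u v :=
  Real.sInf_nonneg <| by rintro r ⟨a, b, ζ, -, -, -, rfl⟩; exact eN_nonneg _

lemma dP_le {u v : Fin n → 𝕜} {a b ζ : 𝕜} (ha : eN (a • u) = 1) (hb : eN (b • v) = 1)
    (hζ : ‖ζ‖ = 1) : dP u v ≤ eN (ζ • a • u - b • v) :=
  csInf_le ⟨0, by rintro r ⟨a, b, ζ, -, -, -, rfl⟩; exact eN_nonneg _⟩ ⟨a, b, ζ, ha, hb, hζ, rfl⟩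

lemma dP_symm (u v : Fin n → 𝕜) : dP u v = dP v u := by
  have swap {u v : Fin n → 𝕜} {a b ζ : 𝕜} (hζ : ‖ζ‖ = 1) :
      eN (ζ • a • u - b • v) = eN (ζ⁻¹ • b • v - a • u) := by
    have hζ0 : ζ ≠ 0 := norm_ne_zero_iff.mp (by rw [hζ]; exact one_ne_zero)
    rw [show ζ⁻¹ • b • v - a • u = (-ζ⁻¹) • (ζ • a • u - b • v) by
      rw [smul_sub, smul_smul, smul_smul, neg_mul, inv_mul_cancel₀ hζ0]; module]
    rw [eN_smul, norm_neg, norm_inv, hζ, inv_one, one_mul]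
  unfold dP
  congr 1
  ext r
  constructor <;> rintro ⟨a, b, ζ, ha, hb, hζ, rfl⟩ <;>
    exact ⟨b, a, ζ⁻¹, hb, ha, by simp [hζ], swap hζ⟩

lemma dP_smul_left {c : 𝕜} (hc : c ≠ 0) (u v : Fin n → 𝕜) : dP (c • u) v = dP u v := by
  unfold dP
  congr 1
  ext r
  constructor
  · rintro ⟨a, b, ζ, ha, hb, hζ, rfl⟩
    exact ⟨a * c, b, ζ, by rwa [mul_smul], hb, hζ, by rw [mul_smul]⟩
  · rintro ⟨a, b, ζ, ha, hb, hζ, rfl⟩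
    have hac : (a * c⁻¹) • c • u = a • u := by rw [smul_smul, inv_mul_cancel_right₀ hc]
    exact ⟨a * c⁻¹, b, ζ, by rwa [hac], hb, hζ, by rw [hac]⟩

lemma dP_smul_right {c : 𝕜} (hc : c ≠ 0) (u v : Fin n → 𝕜) : dP u (c • v) = dP u v := by
  rw [dP_symm, dP_smul_left hc, dP_symm]

lemma exists_dP_eq {u v : Fin n → 𝕜} (hu : u ≠ 0) (hv : v ≠ 0) :
    ∃ a b : 𝕜, eN (a • u) = 1 ∧ eN (b • v) = 1 ∧ dP u v = eN (a • u - b • v) := by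
  obtain ⟨α, hα⟩ : ∃ α : 𝕜, eN (α • u) = 1 := ⟨_, eN_inv_eN_smul hu⟩
  obtain ⟨β, hβ⟩ : ∃ β : 𝕜, eN (β • v) = 1 := ⟨_, eN_inv_eN_smul hv⟩
  have hα0 := ne_zero_of_eN_smul_eq_one hα
  have hβ0 := ne_zero_of_eN_smul_eq_one hβ
  obtain ⟨ζ₀, hζ₀, hmin⟩ := (isCompact_sphere (0 : 𝕜) 1).exists_isMinOn
    (NormedSpace.sphere_nonempty.mpr zero_le_one)
    (f := fun ζ => eN (ζ • α • u - β • v)) (continuous_eN.comp (by fun_prop)).continuousOn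
  rw [mem_sphere_zero_iff_norm] at hζ₀
  refine ⟨ζ₀ * α, β, by rw [mul_smul, eN_smul, hζ₀, hα, one_mul], hβ, ?_⟩
  rw [mul_smul]
  refine le_antisymm (dP_le hα hβ hζ₀) (le_csInf ⟨_, α, β, ζ₀, hα, hβ, hζ₀, rfl⟩ ?_)
  rintro r ⟨a, b, ζ, ha, hb, hζ, rfl⟩
  have hb0 := ne_zero_of_eN_smul_eq_one hb
  have hab : ‖a‖ = ‖α‖ := norm_eq_of_eN_smul_eq_one ha hα
  have hbb : ‖b‖ = ‖β‖ := norm_eq_of_eN_smul_eq_one hb hβ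
  have hα' : ‖α‖ ≠ 0 := norm_ne_zero_iff.mpr hα0
  have hβ' : ‖β‖ ≠ 0 := norm_ne_zero_iff.mpr hβ0
  set ζ' := ζ * a * β / (b * α)
  have hζ' : ζ' ∈ Metric.sphere (0 : 𝕜) 1 := by
    rw [mem_sphere_zero_iff_norm]
    simp only [ζ', norm_div, norm_mul, hζ, hab, hbb]
    field_simp
  have key : ζ • a • u - b • v = (b / β) • (ζ' • α • u - β • v) := by
    simp only [ζ', smul_sub, smul_smul]
    congr 2
    · field_simp
    · field_simp
  calc eN (ζ₀ • α • u - β • v) ≤ eN (ζ' • α • u - β • v) := hmin hζ'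
    _ = eN (ζ • a • u - b • v) := by
      rw [key, eN_smul, norm_div, hbb, div_self hβ', one_mul]

lemma dP_triangle {u v w : Fin n → 𝕜} (hu : u ≠ 0) (hv : v ≠ 0) (hw : w ≠ 0) :
    dP u w ≤ dP u v + dP v w := by
  obtain ⟨a₁, b₁, ha₁, hb₁, h₁⟩ := exists_dP_eq hu hv
  obtain ⟨a₂, b₂, ha₂, hb₂, h₂⟩ := exists_dP_eq hv hw
  have hb₁0 := ne_zero_of_eN_smul_eq_one hb₁
  have hτ : ‖a₂ / b₁‖ = 1 := by
    rw [norm_div, norm_eq_of_eN_smul_eq_one ha₂ hb₁, div_self (norm_ne_zero_iff.mpr hb₁0)]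
  have key : (a₂ / b₁) • a₁ • u - b₂ • w =
      (a₂ / b₁) • (a₁ • u - b₁ • v) + (a₂ • v - b₂ • w) := by
    rw [smul_sub, smul_smul, smul_smul, div_mul_cancel₀ _ hb₁0]; abel
  calc dP u w ≤ eN ((a₂ / b₁) • a₁ • u - b₂ • w) := dP_le ha₁ hb₂ hτ
    _ ≤ eN ((a₂ / b₁) • (a₁ • u - b₁ • v)) + eN (a₂ • v - b₂ • w) := key ▸ eN_add_le _ _
    _ = dP u v + dP v w := by rw [eN_smul, hτ, one_mul, h₁, h₂]

lemma norm_inv_norm_smul_sub_le {E : Type*} [NormedAddCommGroup E] [NormedSpace 𝕜 E]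
    {x y : E} (hx : x ≠ 0) (hy : y ≠ 0) :
    ‖(‖x‖⁻¹ : 𝕜) • x - (‖y‖⁻¹ : 𝕜) • y‖ ≤ 2 * ‖x - y‖ / ‖x‖ := by
  have hx' : 0 < ‖x‖ := norm_pos_iff.mpr hx
  have key : (‖x‖ : 𝕜) • ((‖x‖⁻¹ : 𝕜) • x - (‖y‖⁻¹ : 𝕜) • y) =
      (x - y) + ((‖y‖ : 𝕜) - ‖x‖) • (‖y‖⁻¹ : 𝕜) • y := by
    have hx'' : (‖x‖ : 𝕜) ≠ 0 := by simpa using hx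
    have hy'' : (‖y‖ : 𝕜) ≠ 0 := by simpa using hy
    rw [smul_sub, sub_smul, smul_smul, smul_smul, smul_smul, mul_inv_cancel₀ hx'',
      mul_inv_cancel₀ hy'', one_smul, one_smul]
    abel
  rw [le_div_iff₀ hx', mul_comm]
  calc ‖x‖ * ‖(‖x‖⁻¹ : 𝕜) • x - (‖y‖⁻¹ : 𝕜) • y‖
      = ‖(x - y) + ((‖y‖ : 𝕜) - ‖x‖) • (‖y‖⁻¹ : 𝕜) • y‖ := by
        rw [← key, norm_smul, RCLike.norm_ofReal, abs_of_pos hx']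
    _ ≤ ‖x - y‖ + |‖y‖ - ‖x‖| := by
        refine (norm_add_le _ _).trans_eq ?_
        rw [norm_smul, norm_smul_inv_norm hy, mul_one, ← RCLike.ofReal_sub, RCLike.norm_ofReal]
    _ ≤ 2 * ‖x - y‖ := by
        linarith [norm_sub_rev y x ▸ abs_norm_sub_norm_le y x]

lemma dP_le_two_mul {u v : Fin n → 𝕜} (hu : u ≠ 0) (hv : v ≠ 0) :
    dP u v ≤ 2 * eN (u - v) / eN u := by
  have h := dP_le (eN_inv_eN_smul hu) (eN_inv_eN_smul hv) (norm_one (α := 𝕜))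
  rw [one_smul] at h
  refine h.trans ?_
  simpa [eN_eq_norm] using norm_inv_norm_smul_sub_le (𝕜 := 𝕜)
    (x := WithLp.toLp 2 u) (y := WithLp.toLp 2 v) (by simpa using hu) (by simpa using hv)

lemma eN_mulVec_le_of_opN_le {A : Matrix (Fin n) (Fin n) 𝕜} {M : ℝ} (hA : opN A ≤ M)
    (v : Fin n → 𝕜) : eN (A *ᵥ v) ≤ M * eN v := by
  rcases eq_or_ne v 0 with rfl | hv
  · simp [eN_eq_norm]
  have hbound : eN (A *ᵥ v) / eN v ≤ opN A := by
    refine le_csInf ⟨‖toEuclideanCLM (𝕜 := 𝕜) A‖, norm_nonneg _, fun v => ?_⟩ ?_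
    · simpa [eN_eq_norm] using (toEuclideanCLM (𝕜 := 𝕜) A).le_opNorm (WithLp.toLp 2 v)
    · rintro c ⟨-, hc⟩
      exact (div_le_iff₀ (eN_pos hv)).mpr (hc v)
  rw [div_le_iff₀ (eN_pos hv)] at hbound
  exact hbound.trans (by gcongr; exact eN_nonneg v)

lemma eN_le_mul_eN_mulVec {h : (Matrix (Fin n) (Fin n) 𝕜)ˣ} {M : ℝ} (hh' : opN h⁻¹.val ≤ M)
    (v : Fin n → 𝕜) : eN v ≤ M * eN (h.val *ᵥ v) := by
  simpa [mulVec_mulVec] using eN_mulVec_le_of_opN_le hh' (h.val *ᵥ v)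

lemma distPS_le {u w : Fin n → 𝕜} {W : Submodule 𝕜 (Fin n → 𝕜)} (hw : w ∈ W) (hw0 : w ≠ 0) :
    distPS u W ≤ dP u w :=
  csInf_le ⟨0, by rintro r ⟨w', -, -, rfl⟩; exact dP_nonneg u w'⟩ ⟨w, hw, hw0, rfl⟩

lemma sub_le_dP_of_le_distPS {u q : Fin n → 𝕜} {V : Submodule 𝕜 (Fin n → 𝕜)} {r t : ℝ}
    (hu0 : u ≠ 0) (hq0 : q ≠ 0) (hr : 0 < r) (hu : r ≤ distPS u V) (hq : distPS q V < t) :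
    r - t ≤ dP u q := by
  obtain ⟨w, hw, hw0⟩ : ∃ w ∈ V, w ≠ 0 := by
    by_contra! hV
    have hemp : {r : ℝ | ∃ w : Fin n → 𝕜, w ∈ V ∧ w ≠ 0 ∧ r = dP u w} = ∅ :=
      Set.eq_empty_of_forall_notMem <| by rintro _ ⟨w, hw, hw0, -⟩; exact hw0 (hV w hw)
    rw [distPS, hemp, Real.sInf_empty] at hu
    linarith
  obtain ⟨_, ⟨v, hv, hv0, rfl⟩, hqv⟩ := exists_lt_of_csInf_lt
    (s := {r : ℝ | ∃ w : Fin n → 𝕜, w ∈ V ∧ w ≠ 0 ∧ r = dP q w}) ⟨_, w, hw, hw0, rfl⟩ hq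
  have := dP_triangle hu0 hq0 hv0
  linarith [hu.trans (distPS_le (u := u) hv hv0), dP_symm q v]

end Distances

def spectralRatio {𝕜 : Type*} [RCLike 𝕜] {n : ℕ} (κ : Fin n → 𝕜) (i₀ : Fin n) : ℝ :=
  (⨆ i : {i : Fin n // i ≠ i₀}, ‖κ i‖) / ‖κ i₀‖

section SpectralRatio

variable {𝕜 : Type*} [RCLike 𝕜] {n : ℕ} {κ : Fin n → 𝕜} {i i₀ : Fin n}

lemma norm_le_spectralRatio_mul (hκ₀ : κ i₀ ≠ 0) (hi : i ≠ i₀) :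
    ‖κ i‖ ≤ spectralRatio κ i₀ * ‖κ i₀‖ := by
  rw [spectralRatio, div_mul_cancel₀ _ (norm_ne_zero_iff.mpr hκ₀)]
  exact le_ciSup (f := fun j : {j : Fin n // j ≠ i₀} => ‖κ j‖) (Set.finite_range _).bddAbove ⟨i, hi⟩

lemma spectralRatio_pos (hκ : ∀ j, κ j ≠ 0) (hi : i ≠ i₀) : 0 < spectralRatio κ i₀ :=
  pos_of_mul_pos_left ((norm_pos_iff.mpr (hκ i)).trans_le (norm_le_spectralRatio_mul (hκ i₀) hi))
    (norm_nonneg _)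

lemma spectralRatio_le_inv (hκ₀ : κ i₀ ≠ 0) (hi : i ≠ i₀) {K : ℝ} (hK : 0 < K)
    (hκ : ∀ j ≠ i₀, K * ‖κ j‖ ≤ ‖κ i₀‖) : spectralRatio κ i₀ ≤ K⁻¹ := by
  have : Nonempty {j : Fin n // j ≠ i₀} := ⟨⟨i, hi⟩⟩
  rw [spectralRatio, div_le_iff₀ (norm_pos_iff.mpr hκ₀)]
  exact ciSup_le fun j => by rw [inv_mul_eq_div, le_div_iff₀' hK]; exact hκ j j.2

end SpectralRatio

def imageCoordHyperplane {𝕜 : Type*} [RCLike 𝕜] {n : ℕ} (A : Matrix (Fin n) (Fin n) 𝕜)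
    (i₀ : Fin n) : Submodule 𝕜 (Fin n → 𝕜) :=
  (LinearMap.ker (LinearMap.proj i₀ : (Fin n → 𝕜) →ₗ[𝕜] 𝕜)).map A.mulVecLin

section Attraction

variable {𝕜 : Type*} [RCLike 𝕜] {n : ℕ} {i₀ : Fin n}
  {h : (Matrix (Fin n) (Fin n) 𝕜)ˣ} {M : ℝ} {μ : Fin n → 𝕜} {ρ : ℝ}

lemma eN_mul_le_of_apply_eq_zero {z : Fin n → 𝕜} {c : ℝ} (hμ : ∀ i ≠ i₀, ‖μ i‖ ≤ c)
    (hc : 0 ≤ c) (hz : z i₀ = 0) : eN (μ * z) ≤ c * eN z := by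
  rw [← abs_of_nonneg hc, ← RCLike.norm_ofReal (K := 𝕜), ← eN_smul]
  refine eN_le_eN_of_norm_le fun i => ?_
  rcases eq_or_ne i i₀ with rfl | hi
  · simp [hz]
  · rw [Pi.mul_apply, Pi.smul_apply, smul_eq_mul, norm_mul, norm_mul, RCLike.norm_ofReal,
      abs_of_nonneg hc]
    exact mul_le_mul_of_nonneg_right (hμ i hi) (norm_nonneg _)

lemma eN_sub_smul_le (a y : Fin n → 𝕜) {i : Fin n} (hy : y i ≠ 0) :
    eN (a - (a i / y i) • y) ≤ eN (a - y) * (1 + eN y / ‖y i‖) := by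
  have key : a - (a i / y i) • y = (a - y) + (-((a - y) i / y i)) • y := by
    rw [Pi.sub_apply, sub_div, div_self hy, neg_sub, sub_smul, one_smul]
    abel
  have hcoef : ‖-((a - y) i / y i)‖ ≤ eN (a - y) / ‖y i‖ := by
    rw [norm_neg, norm_div]
    gcongr
    exact norm_apply_le_eN _ i
  calc eN (a - (a i / y i) • y) ≤ eN (a - y) + ‖-((a - y) i / y i)‖ * eN y := by
        rw [key, ← eN_smul]; exact eN_add_le _ _
    _ ≤ eN (a - y) + eN (a - y) / ‖y i‖ * eN y := by gcongr; exact eN_nonneg y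
    _ = eN (a - y) * (1 + eN y / ‖y i‖) := by ring

lemma dP_mulVec_mul_le (hh : opN h.val ≤ M) (hh' : opN h⁻¹.val ≤ M) (hM : 0 < M)
    (hμ : ∀ i ≠ i₀, ‖μ i‖ ≤ ρ * ‖μ i₀‖) (hρ : 0 ≤ ρ) (hμ₀ : μ i₀ ≠ 0)
    {a b : Fin n → 𝕜} (ha : a i₀ ≠ 0) (hab : a i₀ = b i₀) :
    dP (h.val *ᵥ (μ * a)) (h.val *ᵥ (μ * b)) ≤ 2 * M ^ 2 * ρ * eN (a - b) / ‖a i₀‖ := by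
  have hμ₀' : 0 < ‖μ i₀‖ := norm_pos_iff.mpr hμ₀
  have ha' : 0 < ‖a i₀‖ := norm_pos_iff.mpr ha
  have hinj := mulVec_injective_of_isUnit h.isUnit
  have hμa : h.val *ᵥ (μ * a) ≠ 0 :=
    (hinj.ne_iff' (mulVec_zero _)).mpr fun e => mul_ne_zero hμ₀ ha (congrFun e i₀)
  have hμb : h.val *ᵥ (μ * b) ≠ 0 :=
    (hinj.ne_iff' (mulVec_zero _)).mpr fun e => mul_ne_zero hμ₀ (hab ▸ ha) (congrFun e i₀)
  have hlow : ‖μ i₀‖ * ‖a i₀‖ / M ≤ eN (h.val *ᵥ (μ * a)) := by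
    rw [div_le_iff₀ hM, mul_comm _ M, ← norm_mul]
    exact (norm_apply_le_eN (μ * a) i₀).trans (eN_le_mul_eN_mulVec hh' _)
  have hdiff : eN (h.val *ᵥ (μ * a) - h.val *ᵥ (μ * b)) ≤ M * (ρ * ‖μ i₀‖ * eN (a - b)) := by
    rw [← mulVec_sub, ← mul_sub]
    have hz : (a - b) i₀ = 0 := by simp [hab]
    refine (eN_mulVec_le_of_opN_le hh _).trans ?_
    gcongr
    exact eN_mul_le_of_apply_eq_zero hμ (by positivity) hz
  calc _ ≤ 2 * eN (h.val *ᵥ (μ * a) - h.val *ᵥ (μ * b)) / eN (h.val *ᵥ (μ * a)) :=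
        dP_le_two_mul hμa hμb
    _ ≤ 2 * (M * (ρ * ‖μ i₀‖ * eN (a - b))) / (‖μ i₀‖ * ‖a i₀‖ / M) := by
        have := eN_nonneg (a - b)
        gcongr
    _ = 2 * M ^ 2 * ρ * eN (a - b) / ‖a i₀‖ := by field_simp

lemma le_norm_inv_mulVec_apply (hh : opN h.val ≤ M) (hM : 0 < M) {u : Fin n → 𝕜} (hu : u ≠ 0)
    {δ : ℝ} (hδ : δ ≤ 2) (hfar : ∀ p ∈ imageCoordHyperplane h.val i₀, p ≠ 0 → δ ≤ dP u p) :
    δ * eN u / (2 * M) ≤ ‖(h⁻¹.val *ᵥ u) i₀‖ := by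
  set y := h⁻¹.val *ᵥ u
  set z := Function.update y i₀ 0
  set e : Fin n → 𝕜 := h.val *ᵥ Pi.single i₀ 1
  have hsplit : u - h.val *ᵥ z = y i₀ • e := by
    have hyz : y - z = y i₀ • Pi.single i₀ 1 := by
      ext i; rcases eq_or_ne i i₀ with rfl | hi <;> simp [z, *]
    have hu' : h.val *ᵥ y = u := by simp [y, mulVec_mulVec]
    rw [← hu', ← mulVec_sub, hyz, mulVec_smul]
  have he : eN e ≤ M := by
    simpa only [eN_single, norm_one, mul_one] using eN_mulVec_le_of_opN_le hh (Pi.single i₀ (1 : 𝕜))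
  have key : δ * eN u ≤ 2 * (‖y i₀‖ * eN e) := by
    by_cases hz : z = 0
    · have hue : eN u = ‖y i₀‖ * eN e := by
        rw [← eN_smul, ← hsplit, hz, mulVec_zero, sub_zero]
      rw [← hue]
      exact mul_le_mul_of_nonneg_right hδ (eN_nonneg u)
    · have hzW : h.val *ᵥ z ∈ imageCoordHyperplane h.val i₀ := ⟨z, by simp [z], rfl⟩
      have hz' : h.val *ᵥ z ≠ 0 :=
        ((mulVec_injective_of_isUnit h.isUnit).ne_iff' (mulVec_zero _)).mpr hz
      have := (hfar _ hzW hz').trans (dP_le_two_mul hu hz')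
      rwa [hsplit, eN_smul, le_div_iff₀ (eN_pos hu)] at this
  rw [div_le_iff₀ (by positivity)]
  nlinarith [norm_nonneg (y i₀)]

lemma conj_diagonal_mulVec (μ v : Fin n → 𝕜) :
    (h.val * diagonal μ * h⁻¹.val) *ᵥ v = h.val *ᵥ (μ * (h⁻¹.val *ᵥ v)) := by
  rw [← mulVec_mulVec, ← mulVec_mulVec]
  congr 1
  ext i
  rw [mulVec_diagonal, Pi.mul_apply]

lemma dP_conj_diagonal_mulVec_single_le (hh : opN h.val ≤ M) (hh' : opN h⁻¹.val ≤ M)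
    (hM : 0 < M) (hμ : ∀ i ≠ i₀, ‖μ i‖ ≤ ρ * ‖μ i₀‖) (hρ : 0 ≤ ρ) (hμ₀ : μ i₀ ≠ 0)
    {x : Fin n → 𝕜} (hx : x ≠ 0) {δ : ℝ} (hδ : 0 < δ) (hδ2 : δ ≤ 2)
    (hfar : ∀ p ∈ imageCoordHyperplane h.val i₀, p ≠ 0 → δ ≤ dP x p) :
    dP ((h.val * diagonal μ * h⁻¹.val) *ᵥ x) (h.val *ᵥ Pi.single i₀ 1) ≤ 4 * M ^ 4 * ρ / δ := by
  set a := h⁻¹.val *ᵥ x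
  have hxa : δ * eN x / (2 * M) ≤ ‖a i₀‖ := le_norm_inv_mulVec_apply hh hM hx hδ2 hfar
  have hx0 := eN_pos hx
  have ha0 : a i₀ ≠ 0 := norm_pos_iff.mp (lt_of_lt_of_le (by positivity) hxa)
  have hsingle : μ * Pi.single i₀ (a i₀) = (μ i₀ * a i₀) • Pi.single i₀ 1 := by
    ext i; rcases eq_or_ne i i₀ with rfl | hi <;> simp [*]
  have hab : eN (a - Pi.single i₀ (a i₀)) ≤ M * eN x := by
    refine (eN_le_eN_of_norm_le fun i => ?_).trans (eN_mulVec_le_of_opN_le hh' x)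
    rcases eq_or_ne i i₀ with rfl | hi
    · simp
    · rw [Pi.sub_apply, Pi.single_eq_of_ne hi, sub_zero]
  rw [conj_diagonal_mulVec, ← dP_smul_right (mul_ne_zero hμ₀ ha0), ← mulVec_smul, ← hsingle]
  calc _ ≤ 2 * M ^ 2 * ρ * eN (a - Pi.single i₀ (a i₀)) / ‖a i₀‖ :=
        dP_mulVec_mul_le hh hh' hM hμ hρ hμ₀ ha0 (by simp)
    _ ≤ 2 * M ^ 2 * ρ * (M * eN x) / (δ * eN x / (2 * M)) := by gcongr
    _ = 4 * M ^ 4 * ρ / δ := by field_simp; ring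

lemma dP_conj_diagonal_mulVec_le_mul_dP (hh : opN h.val ≤ M) (hh' : opN h⁻¹.val ≤ M)
    (hM : 0 < M) (hμ : ∀ i ≠ i₀, ‖μ i‖ ≤ ρ * ‖μ i₀‖) (hρ : 0 ≤ ρ) (hμ₀ : μ i₀ ≠ 0)
    {x x' : Fin n → 𝕜} (hx : x ≠ 0) (hx' : x' ≠ 0) {δ : ℝ} (hδ : 0 < δ) (hδ2 : δ ≤ 2)
    (hfar : ∀ p ∈ imageCoordHyperplane h.val i₀, p ≠ 0 → δ ≤ dP x p)
    (hfar' : ∀ p ∈ imageCoordHyperplane h.val i₀, p ≠ 0 → δ ≤ dP x' p) :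
    dP ((h.val * diagonal μ * h⁻¹.val) *ᵥ x) ((h.val * diagonal μ * h⁻¹.val) *ᵥ x') ≤
      4 * M ^ 4 * (1 + 2 * M ^ 2 / δ) * ρ / δ * dP x x' := by
  obtain ⟨α, β, hα, hβ, hd⟩ := exists_dP_eq hx hx'
  have hα0 := ne_zero_of_eN_smul_eq_one hα
  have hβ0 := ne_zero_of_eN_smul_eq_one hβ
  set a := h⁻¹.val *ᵥ (α • x)
  set y := h⁻¹.val *ᵥ (β • x')
  have ha : δ / (2 * M) ≤ ‖a i₀‖ := by
    have := le_norm_inv_mulVec_apply hh hM (smul_ne_zero hα0 hx) hδ2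
      (by simpa only [dP_smul_left hα0] using hfar)
    rwa [hα, mul_one] at this
  have hy : δ / (2 * M) ≤ ‖y i₀‖ := by
    have := le_norm_inv_mulVec_apply hh hM (smul_ne_zero hβ0 hx') hδ2
      (by simpa only [dP_smul_left hβ0] using hfar')
    rwa [hβ, mul_one] at this
  have hpos : 0 < δ / (2 * M) := by positivity
  have ha0 : a i₀ ≠ 0 := norm_pos_iff.mp (hpos.trans_le ha)
  have hy0 : y i₀ ≠ 0 := norm_pos_iff.mp (hpos.trans_le hy)
  have hay : eN (a - y) ≤ M * dP x x' := by
    rw [hd, ← mulVec_sub]; exact eN_mulVec_le_of_opN_le hh' _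
  have hyM : eN y / ‖y i₀‖ ≤ 2 * M ^ 2 / δ := by
    have : eN y ≤ M := by simpa only [hβ, mul_one] using eN_mulVec_le_of_opN_le hh' (β • x')
    calc eN y / ‖y i₀‖ ≤ M / (δ / (2 * M)) := by gcongr
      _ = 2 * M ^ 2 / δ := by field_simp
  have hd0 := dP_nonneg x x'
  have hab : eN (a - (a i₀ / y i₀) • y) ≤ M * dP x x' * (1 + 2 * M ^ 2 / δ) :=
    (eN_sub_smul_le a y hy0).trans (by have := eN_nonneg y; gcongr)
  -- rescale `y` so that its `i₀`-coordinate matches that of `a`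
  rw [← dP_smul_left hα0, ← dP_smul_right hβ0, ← mulVec_smul, ← mulVec_smul,
    conj_diagonal_mulVec, conj_diagonal_mulVec, ← dP_smul_right (div_ne_zero ha0 hy0),
    ← mulVec_smul, ← mul_smul_comm]
  calc _ ≤ 2 * M ^ 2 * ρ * eN (a - (a i₀ / y i₀) • y) / ‖a i₀‖ :=
        dP_mulVec_mul_le hh hh' hM hμ hρ hμ₀ ha0 (by simp [hy0])
    _ ≤ 2 * M ^ 2 * ρ * (M * dP x x' * (1 + 2 * M ^ 2 / δ)) / (δ / (2 * M)) := by gcongr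
    _ = _ := by field_simp; ring

end Attraction

section Constants

variable {ε M ρ : ℝ}

lemma pow_le_of_le_div_pow (hε0 : 0 < ε) (hε1 : ε ≤ 1) (hM : 1 ≤ M) (hρ0 : 0 ≤ ρ)
    (hρ : ρ ≤ (ε / (10 * M)) ^ 12) {s : ℕ} (hs : s ≠ 0) : ρ ^ s ≤ (ε / (10 * M)) ^ 12 := by
  refine (pow_le_of_le_one hρ0 (hρ.trans (pow_le_one₀ (by positivity) ?_)) hs).trans hρ
  rw [div_le_one (by positivity)]
  linarith

lemma attraction_constant_le (hε0 : 0 < ε) (hM : 1 ≤ M) (hρ : ρ ≤ (ε / (10 * M)) ^ 12) :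
    4 * M ^ 4 * ρ / (2 * ε / 5) ≤ ε ^ 11 := by
  have hM0 : 0 < M := by linarith
  calc 4 * M ^ 4 * ρ / (2 * ε / 5) ≤ 4 * M ^ 4 * (ε / (10 * M)) ^ 12 / (2 * ε / 5) := by
        gcongr
    _ = ε ^ 11 * (1 / (10 ^ 11 * M ^ 8)) := by field_simp; ring
    _ ≤ ε ^ 11 * 1 := by
        gcongr
        rw [div_le_one (by positivity)]
        nlinarith [one_le_pow₀ (n := 8) hM]
    _ = ε ^ 11 := mul_one _

lemma lipschitz_constant_le (hε0 : 0 < ε) (hε1 : ε ≤ 1) (hM : 1 ≤ M) (hρ0 : 0 < ρ) {s : ℕ}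
    (hρ : ρ ^ s ≤ (ε / (10 * M)) ^ 12) :
    4 * M ^ 4 * (1 + 2 * M ^ 2 / (2 * ε / 5)) * ρ ^ s / (2 * ε / 5) ≤ ρ ^ ((s : ℝ) / 2) := by
  have hM0 : 0 < M := by linarith
  set t := ρ ^ ((s : ℝ) / 2)
  have ht0 : 0 ≤ t := by positivity
  have ht : t ^ 2 = ρ ^ s := by
    rw [← Real.rpow_mul_natCast hρ0.le, ← Real.rpow_natCast]; push_cast; ring_nf
  have ht6 : t ≤ (ε / (10 * M)) ^ 6 := by
    refine (pow_le_pow_iff_left₀ ht0 (by positivity) two_ne_zero).mp ?_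
    rw [ht, ← pow_mul]
    exact hρ
  have hK : 4 * M ^ 4 * (1 + 2 * M ^ 2 / (2 * ε / 5)) / (2 * ε / 5) * (ε / (10 * M)) ^ 6 ≤ 1 := by
    have e : 4 * M ^ 4 * (1 + 2 * M ^ 2 / (2 * ε / 5)) / (2 * ε / 5) * (ε / (10 * M)) ^ 6 =
        (ε ^ 5 + 5 * M ^ 2 * ε ^ 4) / (10 ^ 5 * M ^ 2) := by field_simp; ring
    rw [e, div_le_one (by positivity)]
    nlinarith [pow_le_one₀ hε0.le hε1 (n := 5), pow_le_one₀ hε0.le hε1 (n := 4),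
      one_le_pow₀ (n := 2) hM]
  calc 4 * M ^ 4 * (1 + 2 * M ^ 2 / (2 * ε / 5)) * ρ ^ s / (2 * ε / 5)
      = 4 * M ^ 4 * (1 + 2 * M ^ 2 / (2 * ε / 5)) / (2 * ε / 5) * t * t := by rw [← ht]; ring
    _ ≤ 4 * M ^ 4 * (1 + 2 * M ^ 2 / (2 * ε / 5)) / (2 * ε / 5) * (ε / (10 * M)) ^ 6 * t := by
        gcongr
    _ ≤ t := by nlinarith

end Constants

/-- attraction estimate for powers of a strongly proximal matrix
`w = h·diag(κ)·h⁻¹`: on points `x'` at distance `≥ ε` from a repelling hyperplane,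
`w^s` is `(max_{i≥2}|κ_i|/|κ_1|)^{s/2}`-Lipschitz on `B_θ(x')` and maps it into the
`ε^{11}`-ball around `[h e_1]`. -/
theorem stmt11 {𝕜 : Type*} [RCLike 𝕜] (n : ℕ) (hn : 2 ≤ n)
    (ε M : ℝ) (hε0 : 0 < ε) (hε1 : ε ≤ 1) (hM : 1 ≤ M)
    (V : Submodule 𝕜 (Fin n → 𝕜))
    (h : (Matrix (Fin n) (Fin n) 𝕜)ˣ) (κ : Fin n → 𝕜) (hκ0 : ∀ i, κ i ≠ 0)
    (hh : opN (h : Matrix (Fin n) (Fin n) 𝕜) ≤ M)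
    (hh' : opN ((h⁻¹ : _) : Matrix (Fin n) (Fin n) 𝕜) ≤ M)
    (hplane : ∀ u ∈ (LinearMap.ker
        (LinearMap.proj (⟨0, by omega⟩ : Fin n) : (Fin n → 𝕜) →ₗ[𝕜] 𝕜)).map
          (Matrix.mulVecLin (h : Matrix (Fin n) (Fin n) 𝕜)),
      u ≠ 0 → distPS u V < ε / 10)
    (hκ : ∀ i : Fin n, i ≠ ⟨0, by omega⟩ →
      (10 * M / ε) ^ (12 : ℕ) * ‖κ i‖ ≤ ‖κ ⟨0, by omega⟩‖)
    (w : Matrix (Fin n) (Fin n) 𝕜)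
    (hw : w = (h : Matrix (Fin n) (Fin n) 𝕜) * Matrix.diagonal κ *
      ((h⁻¹ : _) : Matrix (Fin n) (Fin n) 𝕜)) :
    ∀ x' : Fin n → 𝕜, x' ≠ 0 → ε ≤ distPS x' V →
      ∀ θ : ℝ, 0 < θ → θ < ε / 2 →
        ∀ s : ℕ, 1 ≤ s →
          ∀ x'' : Fin n → 𝕜, x'' ≠ 0 → dP x'' x' ≤ θ →
            dP ((w ^ s).mulVec x'') ((w ^ s).mulVec x') ≤
                θ * (((⨆ i : {i : Fin n // i ≠ ⟨0, by omega⟩}, ‖κ (i : Fin n)‖) /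
                  ‖κ (⟨0, by omega⟩ : Fin n)‖) ^ ((s : ℝ) / 2)) ∧
              dP ((w ^ s).mulVec x'')
                ((h : Matrix (Fin n) (Fin n) 𝕜).mulVec (Pi.single ⟨0, by omega⟩ 1)) ≤
                  ε ^ 11 := by
  intro x' hx' hx'V θ hθ hθε s hs x'' hx'' hx''θ
  set i₀ : Fin n := ⟨0, by omega⟩
  have hi₁ : (⟨1, by omega⟩ : Fin n) ≠ i₀ := by simp [i₀, Fin.ext_iff]
  have hM0 : 0 < M := by linarith
  set ρ := spectralRatio κ i₀
  have hρ0 : 0 < ρ := spectralRatio_pos hκ0 hi₁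
  have hρ := spectralRatio_le_inv (hκ0 i₀) hi₁ (by positivity) hκ
  rw [← inv_pow, inv_div] at hρ
  have hρs := pow_le_of_le_div_pow hε0 hε1 hM hρ0.le hρ (by omega : s ≠ 0)
  have hμ : ∀ i ≠ i₀, ‖(κ ^ s) i‖ ≤ ρ ^ s * ‖(κ ^ s) i₀‖ := fun i hi => by
    simp only [Pi.pow_apply, norm_pow, ← mul_pow]
    gcongr
    exact norm_le_spectralRatio_mul (hκ0 i₀) hi
  have hfar' : ∀ p ∈ imageCoordHyperplane h.val i₀, p ≠ 0 → 9 * ε / 10 ≤ dP x' p :=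
    fun p hp hp0 => by linarith [sub_le_dP_of_le_distPS hx' hp0 hε0 hx'V (hplane p hp hp0)]
  have hfar'' : ∀ p ∈ imageCoordHyperplane h.val i₀, p ≠ 0 → 2 * ε / 5 ≤ dP x'' p :=
    fun p hp hp0 => by linarith [hfar' p hp hp0, dP_triangle hx' hx'' hp0, dP_symm x' x'']
  have hδ : 2 * ε / 5 ≤ 2 := by linarith
  rw [hw, Units.conj_pow, diagonal_pow]
  refine ⟨?_, ?_⟩
  · refine (dP_conj_diagonal_mulVec_le_mul_dP hh hh' hM0 hμ (by positivity)
      (pow_ne_zero s (hκ0 i₀)) hx'' hx' (by positivity) hδ hfar''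
      fun p hp hp0 => by linarith [hfar' p hp hp0]).trans ?_
    rw [mul_comm θ]
    exact mul_le_mul (lipschitz_constant_le hε0 hε1 hM hρ0 hρs) hx''θ (dP_nonneg _ _)
      (by positivity)
  · exact (dP_conj_diagonal_mulVec_single_le hh hh' hM0 hμ (by positivity)
      (pow_ne_zero s (hκ0 i₀)) hx'' (by positivity) hδ hfar'').trans
      (attraction_constant_le hε0 hM hρs)
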